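/- For 0 < q < 1, α > -1, and |t y| sufficiently small, Σ_{n=0}^∞ ((-1)^n q^{n(n-1)/2}/(q;q)_n) L_n^{(α)}(x,y) t^n = (ty;q)_∞ · Σ_{n=0}^∞ ( [(-1)^n q^{n(n-1)/2}]^3 / ((q^{α+1};q)_n (ty;q)_n (q;q)_n) ) · (-q^{α+1} x t)^n. -/

import Mathlib

open Finset

/-- q-shifted factorial (a;q)_n -/
noncomputable def qPoch (a q : ℝ) (n : ℕ) : ℝ := ∏ j ∈ Finset.range n, (1 - a * q ^ j)

/-- infinite q-shifted factorial (a;q)_∞ -/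
noncomputable def qPochInf (a q : ℝ) : ℝ := ∏' j : ℕ, (1 - a * q ^ j)

/-- q-binomial coefficient [n choose k]_q -/
noncomputable def qBinom (q : ℝ) (n k : ℕ) : ℝ :=
  qPoch q q n / (qPoch q q k * qPoch q q (n - k))

/-- q-derivative -/
noncomputable def Dq (q : ℝ) (f : ℝ → ℝ) (x : ℝ) : ℝ := (f x - f (q * x)) / x

/-- bivariate q-Laguerre polynomial L_n^{(α)}(x,y) -/
noncomputable def qLaguerre (q α : ℝ) (n : ℕ) (x y : ℝ) : ℝ :=
  ∑ k ∈ Finset.range (n + 1),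
    (-1 : ℝ) ^ k * qBinom q n k * (q ^ ((k : ℝ) ^ 2 + (k : ℝ) * α)) /
      qPoch (q ^ (α + 1)) q k * x ^ k * y ^ (n - k)

/-- bivariate little q-Jacobi polynomial p_n^{(α,β)}(x,y) -/
noncomputable def littleQJacobi (q a b : ℝ) (n : ℕ) (x y : ℝ) : ℝ :=
  ∑ k ∈ Finset.range (n + 1),
    (-1 : ℝ) ^ k * (q ^ (((k : ℝ) * ((k : ℝ) + 1 - 2 * (n : ℝ))) / 2)) * qBinom q n k *
      (qPoch (a * b * q ^ (n + 1)) q k / qPoch (a * q) q k) * x ^ k * y ^ (n - k)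

/-!
Put `n = k + m` and let `a_k` be the coefficient of `[n choose k]_q y^(n-k)` in `L_n^{(α)}(x, y)`.
Since `[k+m choose k]_q / (q;q)_(k+m) = 1 / ((q;q)_k (q;q)_m)` and
`C(k+m, 2) = C(k, 2) + C(m, 2) + k m`, the left-hand side becomes the absolutely convergent double
series `Σ_k e_k(t) a_k Σ_m e_m(q^k t y)`, where `e_m(z) = (-1)^m q^C(m,2) z^m / (q;q)_m`.
By Euler's identity `Σ_m e_m(z) = (z;q)_∞`, the inner sum is `(ty;q)_∞ / (ty;q)_k`, and
`q^(k² + kα) = q^(2 C(k,2)) (q^(α+1))^k` turns what is left into the ₀φ₂ series.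

Euler's identity follows from `E(z) = (1 - z) E(q z)` for `E(z) = Σ_m e_m(z)`: iterating,
`E(z) = (z;q)_N E(q^N z)`, and `E(q^N z) → E(0) = 1`.
-/

open Filter Topology

section qPoch
variable {a q : ℝ}

lemma qPoch_succ (a q : ℝ) (n : ℕ) : qPoch a q (n + 1) = qPoch a q n * (1 - a * q ^ n) :=
  prod_range_succ _ _

lemma one_sub_abs_pow_le_qPoch (hq : |q| ≤ 1) (ha : |a| ≤ 1) (n : ℕ) :
    (1 - |a|) ^ n ≤ qPoch a q n := by
  have hfactor (j : ℕ) : 1 - |a| ≤ 1 - a * q ^ j := by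
    have : a * q ^ j ≤ |a| * |q| ^ j := by rw [← abs_pow, ← abs_mul]; exact le_abs_self _
    have : |a| * |q| ^ j ≤ |a| :=
      mul_le_of_le_one_right (abs_nonneg a) (pow_le_one₀ (abs_nonneg q) hq)
    linarith
  simpa [qPoch] using
    prod_le_prod (s := range n) (fun _ _ => sub_nonneg.2 ha) fun j _ => hfactor j

lemma qPoch_pos (hq : |q| ≤ 1) (ha : |a| < 1) (n : ℕ) : 0 < qPoch a q n :=
  (pow_pos (sub_pos.2 ha) n).trans_le (one_sub_abs_pow_le_qPoch hq ha.le n)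

lemma one_sub_pow_le_qPoch_self (hq0 : 0 ≤ q) (hq1 : q < 1) (m : ℕ) :
    (1 - q) ^ m ≤ qPoch q q m := by
  have hq : |q| ≤ 1 := (abs_of_nonneg hq0).trans_le hq1.le
  simpa [abs_of_nonneg hq0] using one_sub_abs_pow_le_qPoch hq hq m

lemma qPoch_self_pos (hq0 : 0 ≤ q) (hq1 : q < 1) (m : ℕ) : 0 < qPoch q q m :=
  (pow_pos (sub_pos.2 hq1) m).trans_le (one_sub_pow_le_qPoch_self hq0 hq1 m)

lemma multipliable_one_sub_mul_pow (hq : |q| < 1) (a : ℝ) :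
    Multipliable fun j : ℕ => 1 - a * q ^ j := by
  simpa [sub_eq_add_neg] using multipliable_one_add_of_summable (f := fun j : ℕ => -(a * q ^ j))
    (by simpa [abs_mul] using (summable_geometric_of_lt_one (abs_nonneg q) hq).mul_left |a|)

lemma qPochInf_eq_qPoch_mul (hq : |q| < 1) (a : ℝ) (k : ℕ) :
    qPochInf a q = qPoch a q k * qPochInf (q ^ k * a) q := by
  have hshift : (fun j : ℕ => 1 - a * q ^ (j + k)) = fun j => 1 - q ^ k * a * q ^ j := by
    ext j; ring
  rw [qPochInf, qPochInf, qPoch, ← Multipliable.prod_mul_tprod_nat_mul' (k := k), hshift]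
  exact hshift ▸ multipliable_one_sub_mul_pow hq _

end qPoch

lemma Nat.triangle_add (k m : ℕ) :
    (k + m) * (k + m - 1) / 2 = k * (k - 1) / 2 + m * (m - 1) / 2 + k * m := by
  induction m with
  | zero => simp
  | succ m ih => rw [← add_assoc, Nat.triangle_succ, ih, Nat.triangle_succ]; ring

lemma summable_pow_triangle_mul_pow {q : ℝ} (hq0 : 0 ≤ q) (hq1 : q < 1) (A : ℝ) :
    Summable fun k : ℕ => q ^ (k * (k - 1) / 2) * A ^ k := by
  refine summable_of_ratio_norm_eventually_le (r := 1 / 2) (by norm_num) ?_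
  have hlim : Tendsto (fun k : ℕ => q ^ k * |A|) atTop (𝓝 0) := by
    simpa using (tendsto_pow_atTop_nhds_zero_of_lt_one hq0 hq1).mul_const |A|
  filter_upwards [hlim.eventually_le_const (by norm_num : (0:ℝ) < 1 / 2)] with k hk
  rw [Nat.triangle_succ, Real.norm_eq_abs, Real.norm_eq_abs, abs_mul, abs_mul, abs_pow, abs_pow,
    abs_pow, abs_pow, abs_of_nonneg hq0, pow_add, pow_succ]
  calc q ^ (k * (k - 1) / 2) * q ^ k * (|A| ^ k * |A|)
      = (q ^ k * |A|) * (q ^ (k * (k - 1) / 2) * |A| ^ k) := by ring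
    _ ≤ 1 / 2 * (q ^ (k * (k - 1) / 2) * |A| ^ k) := by gcongr

theorem Summable.tsum_prod_eq_tsum_sum_range {α : Type*} [AddCommGroup α] [UniformSpace α]
    [IsUniformAddGroup α] [CompleteSpace α] [T0Space α] {f : ℕ × ℕ → α}
    (hf : Summable f) :
    ∑' p, f p = ∑' n, ∑ k ∈ range (n + 1), f (k, n - k) := by
  have hsigma : Summable fun c => f (HasAntidiagonal.sigmaAntidiagonalEquivProd c) :=
    HasAntidiagonal.sigmaAntidiagonalEquivProd.summable_iff.2 hf
  rw [← HasAntidiagonal.sigmaAntidiagonalEquivProd.tsum_eq f, hsigma.tsum_sigma]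
  simp_rw [← Nat.sum_antidiagonal_eq_sum_range_succ_mk, ← Finset.tsum_subtype]
  rfl

noncomputable def eulerTerm (q z : ℝ) (m : ℕ) : ℝ :=
  (-1) ^ m * q ^ (m * (m - 1) / 2) * z ^ m / qPoch q q m

section Euler
variable {q : ℝ}

lemma abs_eulerTerm_le (hq0 : 0 ≤ q) (hq1 : q < 1) {z r : ℝ} (hz : |z| ≤ r) (m : ℕ) :
    |eulerTerm q z m| ≤ q ^ (m * (m - 1) / 2) * (r / (1 - q)) ^ m := by
  have : 0 ≤ r := (abs_nonneg z).trans hz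
  rw [eulerTerm, abs_div, abs_mul, abs_mul, abs_pow, abs_pow, abs_pow, abs_neg, abs_one, one_pow,
    one_mul, abs_of_nonneg hq0, abs_of_pos (qPoch_self_pos hq0 hq1 m), div_pow, mul_div_assoc]
  gcongr
  exact one_sub_pow_le_qPoch_self hq0 hq1 m

lemma summable_eulerTerm (hq0 : 0 ≤ q) (hq1 : q < 1) (z : ℝ) : Summable (eulerTerm q z) :=
  .of_norm_bounded (summable_pow_triangle_mul_pow hq0 hq1 _) (abs_eulerTerm_le hq0 hq1 le_rfl)

lemma eulerTerm_zero (q z : ℝ) : eulerTerm q z 0 = 1 := by simp [eulerTerm, qPoch]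

lemma eulerTerm_succ_sub (hq0 : 0 ≤ q) (hq1 : q < 1) (z : ℝ) (m : ℕ) :
    eulerTerm q z (m + 1) - eulerTerm q (q * z) (m + 1) = -z * eulerTerm q (q * z) m := by
  have := (qPoch_self_pos hq0 hq1 m).ne'
  have hfactor : 1 - q * q ^ m ≠ 0 := by
    have := pow_le_one₀ hq0 hq1.le (n := m); nlinarith
  rw [eulerTerm, eulerTerm, eulerTerm, Nat.triangle_succ, qPoch_succ]
  field_simp
  ring

lemma tsum_eulerTerm_eq_one_sub_mul (hq0 : 0 ≤ q) (hq1 : q < 1) (z : ℝ) :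
    ∑' m, eulerTerm q z m = (1 - z) * ∑' m, eulerTerm q (q * z) m := by
  have hs := summable_eulerTerm hq0 hq1 z
  have hs' := summable_eulerTerm hq0 hq1 (q * z)
  have hdiff := (hs.sub hs').tsum_eq_zero_add
  simp only [eulerTerm_zero, sub_self, eulerTerm_succ_sub hq0 hq1, zero_add,
    tsum_mul_left, hs.tsum_sub hs'] at hdiff
  linear_combination hdiff

lemma tsum_eulerTerm_eq_qPoch_mul (hq0 : 0 ≤ q) (hq1 : q < 1) (z : ℝ) (N : ℕ) :
    ∑' m, eulerTerm q z m = qPoch z q N * ∑' m, eulerTerm q (q ^ N * z) m := by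
  induction N with
  | zero => simp [qPoch]
  | succ N ih =>
    rw [ih, tsum_eulerTerm_eq_one_sub_mul hq0 hq1 (q ^ N * z), qPoch_succ, pow_succ', mul_assoc q]
    ring

lemma tendsto_tsum_eulerTerm_pow_mul (hq0 : 0 ≤ q) (hq1 : q < 1) (z : ℝ) :
    Tendsto (fun N : ℕ => ∑' m, eulerTerm q (q ^ N * z) m) atTop (𝓝 1) := by
  have hpow := tendsto_pow_atTop_nhds_zero_of_lt_one hq0 hq1
  have hlim : ∑' m, eulerTerm q 0 m = 1 := by
    rw [tsum_eq_single 0 fun m hm => by simp [eulerTerm, zero_pow hm], eulerTerm_zero]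
  rw [← hlim]
  refine tendsto_tsum_of_dominated_convergence (summable_pow_triangle_mul_pow hq0 hq1 _)
    (fun m => ?_) (.of_forall fun N m => abs_eulerTerm_le hq0 hq1 (r := |z|) ?_ m)
  · have : Continuous fun w => eulerTerm q w m := by unfold eulerTerm; fun_prop
    exact this.tendsto 0 |>.comp (by simpa using hpow.mul_const z)
  · rw [abs_mul, abs_of_nonneg (pow_nonneg hq0 N)]
    exact mul_le_of_le_one_left (abs_nonneg z) (pow_le_one₀ hq0 hq1.le)

theorem tsum_eulerTerm (hq0 : 0 ≤ q) (hq1 : q < 1) (z : ℝ) :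
    ∑' m, eulerTerm q z m = qPochInf z q := by
  have hprod : Tendsto (fun N => qPoch z q N) atTop (𝓝 (qPochInf z q)) :=
    (multipliable_one_sub_mul_pow ((abs_of_nonneg hq0).trans_lt hq1) z).hasProd.tendsto_prod_nat
  have := hprod.mul (tendsto_tsum_eulerTerm_pow_mul hq0 hq1 z)
  rw [mul_one] at this
  exact tendsto_nhds_unique
    (tendsto_const_nhds.congr (tsum_eulerTerm_eq_qPoch_mul hq0 hq1 z)) this

end Euler

section Transform
variable {q : ℝ}

lemma eulerTerm_add_mul_qBinom (hq0 : 0 ≤ q) (hq1 : q < 1) (t y : ℝ) (k m : ℕ) :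
    eulerTerm q t (k + m) * qBinom q (k + m) k * y ^ m =
      eulerTerm q t k * eulerTerm q (q ^ k * (t * y)) m := by
  have := (qPoch_self_pos hq0 hq1 k).ne'
  have := (qPoch_self_pos hq0 hq1 m).ne'
  have := (qPoch_self_pos hq0 hq1 (k + m)).ne'
  rw [eulerTerm, eulerTerm, eulerTerm, qBinom, Nat.add_sub_cancel_left, Nat.triangle_add]
  field_simp
  ring

theorem tsum_eulerTerm_mul_qBinom_sum (hq0 : 0 ≤ q) (hq1 : q < 1) {a : ℕ → ℝ} {R : ℝ}
    (ha : ∀ k, |a k| ≤ R ^ k) (t y : ℝ) :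
    ∑' n, eulerTerm q t n * ∑ k ∈ range (n + 1), qBinom q n k * a k * y ^ (n - k) =
      ∑' k, eulerTerm q t k * a k * qPochInf (q ^ k * (t * y)) q := by
  set f : ℕ × ℕ → ℝ :=
    fun p => eulerTerm q t p.1 * a p.1 * eulerTerm q (q ^ p.1 * (t * y)) p.2
  have hf : Summable f := by
    have hR : 0 ≤ R := (abs_nonneg _).trans ((ha 1).trans_eq (pow_one R))
    have hqk (k : ℕ) : |q ^ k * (t * y)| ≤ |t * y| := by
      rw [abs_mul, abs_of_nonneg (pow_nonneg hq0 k)]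
      exact mul_le_of_le_one_left (abs_nonneg _) (pow_le_one₀ hq0 hq1.le)
    refine .of_norm_bounded
      ((summable_pow_triangle_mul_pow hq0 hq1 (|t| / (1 - q) * R)).mul_of_nonneg
        (summable_pow_triangle_mul_pow hq0 hq1 (|t * y| / (1 - q))) (fun k => by positivity)
        (fun m => by positivity)) fun p => ?_
    calc ‖f p‖ = |eulerTerm q t p.1| * |a p.1| * |eulerTerm q (q ^ p.1 * (t * y)) p.2| := by
            simp only [f, Real.norm_eq_abs, abs_mul]
        _ ≤ q ^ (p.1 * (p.1 - 1) / 2) * (|t| / (1 - q)) ^ p.1 * R ^ p.1 *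
            (q ^ (p.2 * (p.2 - 1) / 2) * (|t * y| / (1 - q)) ^ p.2) := by
          gcongr
          exacts [abs_eulerTerm_le hq0 hq1 le_rfl p.1, ha p.1,
            abs_eulerTerm_le hq0 hq1 (hqk p.1) p.2]
        _ = _ := by ring
  calc ∑' n, eulerTerm q t n * ∑ k ∈ range (n + 1), qBinom q n k * a k * y ^ (n - k)
      = ∑' n, ∑ k ∈ range (n + 1), f (k, n - k) := by
        refine tsum_congr fun n => ?_
        rw [mul_sum]
        refine sum_congr rfl fun k hk => ?_
        obtain ⟨m, rfl⟩ := Nat.exists_eq_add_of_le (mem_range_succ_iff.1 hk)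
        simp only [f, Nat.add_sub_cancel_left]
        linear_combination a k * eulerTerm_add_mul_qBinom hq0 hq1 t y k m
    _ = ∑' k, ∑' m, f (k, m) := by rw [← hf.tsum_prod_eq_tsum_sum_range, hf.tsum_prod]
    _ = ∑' k, eulerTerm q t k * a k * qPochInf (q ^ k * (t * y)) q := by
        simp only [f, tsum_mul_left, tsum_eulerTerm hq0 hq1]

end Transform

noncomputable def qLaguerreCoeff (q α x : ℝ) (k : ℕ) : ℝ :=
  (-1) ^ k * q ^ ((k : ℝ) ^ 2 + k * α) / qPoch (q ^ (α + 1)) q k * x ^ k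

section Laguerre
variable {q α : ℝ}

lemma qLaguerre_eq_sum (q α : ℝ) (n : ℕ) (x y : ℝ) :
    qLaguerre q α n x y =
      ∑ k ∈ range (n + 1), qBinom q n k * qLaguerreCoeff q α x k * y ^ (n - k) :=
  sum_congr rfl fun k _ => by rw [qLaguerreCoeff]; ring

lemma rpow_sq_add_mul_eq (hq : 0 < q) (α : ℝ) (k : ℕ) :
    q ^ ((k : ℝ) ^ 2 + k * α) = (q ^ (k * (k - 1) / 2)) ^ 2 * (q ^ (α + 1)) ^ k := by
  rw [← pow_mul, Nat.div_mul_cancel (Nat.even_mul_pred_self k).two_dvd,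
    ← Real.rpow_natCast q (k * (k - 1)), ← Real.rpow_natCast (q ^ (α + 1)) k,
    ← Real.rpow_mul hq.le, ← Real.rpow_add hq]
  congr 1
  rcases k with _ | k
  · simp
  · push_cast [Nat.add_sub_cancel]; ring

lemma abs_qLaguerreCoeff_le (hq : 0 < q) (hq1 : q < 1) (hα : -1 < α) (x : ℝ) (k : ℕ) :
    |qLaguerreCoeff q α x k| ≤ (q ^ (α + 1) * |x| / (1 - q ^ (α + 1))) ^ k := by
  have hQ0 : 0 < q ^ (α + 1) := Real.rpow_pos_of_pos hq _
  have hQ1 : q ^ (α + 1) < 1 := Real.rpow_lt_one hq.le hq1 (by linarith)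
  have hq' : |q| ≤ 1 := (abs_of_pos hq).trans_le hq1.le
  have hpoch := one_sub_abs_pow_le_qPoch hq' (abs_of_pos hQ0 ▸ hQ1.le) k
  rw [abs_of_pos hQ0] at hpoch
  have hC : (q ^ (k * (k - 1) / 2)) ^ 2 ≤ 1 :=
    pow_le_one₀ (by positivity) (pow_le_one₀ hq.le hq1.le)
  rw [qLaguerreCoeff, rpow_sq_add_mul_eq hq, abs_mul, abs_div, abs_mul, abs_pow, abs_neg, abs_one,
    one_pow, one_mul, abs_of_pos (by positivity),
    abs_of_pos ((pow_pos (sub_pos.2 hQ1) k).trans_le hpoch), abs_pow, div_pow, mul_pow]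
  calc (q ^ (k * (k - 1) / 2)) ^ 2 * (q ^ (α + 1)) ^ k / qPoch (q ^ (α + 1)) q k * |x| ^ k
      ≤ 1 * (q ^ (α + 1)) ^ k / (1 - q ^ (α + 1)) ^ k * |x| ^ k := by gcongr
    _ = (q ^ (α + 1)) ^ k * |x| ^ k / (1 - q ^ (α + 1)) ^ k := by ring

end Laguerre

lemma eulerTerm_mul_qLaguerreCoeff_mul_qPochInf {q α x y t : ℝ} (hq : 0 < q) (hq1 : q < 1)
    (hα : -1 < α) (hty : |t * y| < 1) (k : ℕ) :
    eulerTerm q t k * qLaguerreCoeff q α x k * qPochInf (q ^ k * (t * y)) q =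
      qPochInf (t * y) q * (((-1 : ℝ) ^ k * q ^ (k * (k - 1) / 2)) ^ 3 /
        (qPoch (q ^ (α + 1)) q k * qPoch (t * y) q k * qPoch q q k) *
          (-q ^ (α + 1) * x * t) ^ k) := by
  have hq' : |q| < 1 := (abs_of_pos hq).trans_lt hq1
  have hQ : |q ^ (α + 1)| < 1 := by
    rw [abs_of_pos (Real.rpow_pos_of_pos hq _)]; exact Real.rpow_lt_one hq.le hq1 (by linarith)
  have := (qPoch_pos hq'.le hq' k).ne'
  have := (qPoch_pos hq'.le hQ k).ne'
  have := (qPoch_pos hq'.le hty k).ne'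
  have hsign : ((-1 : ℝ) ^ k) ^ 2 = 1 := by rw [← pow_mul, pow_mul', neg_one_sq, one_pow]
  rw [qPochInf_eq_qPoch_mul hq' (t * y) k, eulerTerm, qLaguerreCoeff, rpow_sq_add_mul_eq hq,
    neg_mul, neg_mul, neg_pow (q ^ (α + 1) * x * t)]
  generalize (-1 : ℝ) ^ k = s at hsign ⊢
  field_simp
  linear_combination -s ^ 2 * (q ^ (α + 1) * t * x) ^ k * qPochInf (q ^ k * t * y) q * hsign

theorem qLaguerre_genfun_one (q α x y t : ℝ) (hq : 0 < q) (hq1 : q < 1) (hα : -1 < α)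
    (hty : |t * y| < 1) :
    (∑' n : ℕ, (-1 : ℝ) ^ n * q ^ (n * (n - 1) / 2) / qPoch q q n *
        qLaguerre q α n x y * t ^ n)
      = qPochInf (t * y) q *
        ∑' n : ℕ, ((-1 : ℝ) ^ n * q ^ (n * (n - 1) / 2)) ^ 3 /
          (qPoch (q ^ (α + 1)) q n * qPoch (t * y) q n * qPoch q q n) *
          (-q ^ (α + 1) * x * t) ^ n := by
  calc (∑' n : ℕ, (-1 : ℝ) ^ n * q ^ (n * (n - 1) / 2) / qPoch q q n *
        qLaguerre q α n x y * t ^ n)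
      = ∑' n, eulerTerm q t n *
          ∑ k ∈ range (n + 1), qBinom q n k * qLaguerreCoeff q α x k * y ^ (n - k) :=
        tsum_congr fun n => by rw [eulerTerm, ← qLaguerre_eq_sum]; ring
    _ = ∑' k, eulerTerm q t k * qLaguerreCoeff q α x k * qPochInf (q ^ k * (t * y)) q :=
        tsum_eulerTerm_mul_qBinom_sum hq.le hq1 (abs_qLaguerreCoeff_le hq hq1 hα x) t y
    _ = _ := by
        rw [← tsum_mul_left]
        exact tsum_congr (eulerTerm_mul_qLaguerreCoeff_mul_qPochInf hq hq1 hα hty)
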